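/- arXiv:2103.05631 — 7 statements merged into one kernel-verified Lean document; each statement's English description precedes it below -/
import Mathlib

section
/- Let X_1,...,X_n be independent real-valued random variables with |X_i − E(X_i)| ≤ L for all i, and let X = ∑ X_i. Then for any δ > 0, P(X ≥ E(X) + δ) ≤ exp(−(δ²/2)/(∑ Var(X_i) + Lδ/3)). -/
open MeasureTheory ProbabilityTheory Real
open scoped Nat

/-!
Comparing the exponential series with a geometric one (`(k + 2)! ≥ 2 * 3 ^ k`) gives
`exp x ≤ 1 + x + x² / (2 (1 - c))` for `|x| ≤ 3c < 3`. Applied to `x = tY` with `c = tL/3`, for a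
centred `Y` with `|Y| ≤ L`, this yields `E[exp (tY)] ≤ exp (t² Var[Y] / (2 (1 - tL/3)))` whenever
`0 ≤ t` and `tL < 3`. By independence these bounds multiply, and Chernoff's bound at
`t = δ / (V + Lδ/3)`, where `V = ∑ Var[X_i]`, gives the inequality. If `V = 0`, every `X_i` is
a.s. equal to its mean and the event is null.
-/

lemma Nat.two_mul_three_pow_le_factorial_add_two (k : ℕ) : 2 * 3 ^ k ≤ (k + 2)! := by
  induction k with
  | zero => simp
  | succ k ih =>
    rw [Nat.factorial_succ, pow_succ]
    nlinarith

namespace Real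

theorem pow_add_two_div_factorial_le {x c : ℝ} (hx : |x| ≤ 3 * c) (k : ℕ) :
    x ^ (k + 2) / (k + 2)! ≤ x ^ 2 / 2 * c ^ k := by
  have hc : 0 ≤ c := by linarith [abs_nonneg x]
  have hfact : (2 * 3 ^ k : ℝ) ≤ (k + 2)! := by
    exact_mod_cast Nat.two_mul_three_pow_le_factorial_add_two k
  rw [div_le_iff₀ (by positivity)]
  calc x ^ (k + 2) ≤ |x| ^ (k + 2) := abs_pow x (k + 2) ▸ le_abs_self _
    _ = x ^ 2 * |x| ^ k := by rw [pow_add, sq_abs, mul_comm]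
    _ ≤ x ^ 2 * (3 * c) ^ k := by gcongr
    _ = x ^ 2 / 2 * c ^ k * (2 * 3 ^ k) := by ring
    _ ≤ x ^ 2 / 2 * c ^ k * (k + 2)! := by gcongr

theorem exp_le_one_add_add_sq_div {x c : ℝ} (hc : c < 1) (hx : |x| ≤ 3 * c) :
    exp x ≤ 1 + x + x ^ 2 / (2 * (1 - c)) := by
  have hc₀ : 0 ≤ c := by linarith [abs_nonneg x]
  have htail : HasSum (fun k : ℕ ↦ x ^ (k + 2) / (k + 2)!) (exp x - (1 + x)) := by
    have := (hasSum_nat_add_iff' 2).mpr (NormedSpace.expSeries_div_hasSum_exp x)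
    simpa [← exp_eq_exp_ℝ, Finset.sum_range_succ, add_comm] using this
  have hgeom := (hasSum_geometric_of_lt_one hc₀ hc).mul_left (x ^ 2 / 2)
  calc exp x = 1 + x + (exp x - (1 + x)) := by ring
    _ ≤ 1 + x + x ^ 2 / 2 * (1 - c)⁻¹ := by
        gcongr; exact hasSum_le (pow_add_two_div_factorial_le hx) htail hgeom
    _ = 1 + x + x ^ 2 / (2 * (1 - c)) := by rw [← div_eq_mul_inv, div_div]

end Real

lemma bernstein_exponent_eq {V L δ t : ℝ} (hV : 0 < V) (hL : 0 ≤ L) (hδ : 0 ≤ δ)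
    (ht : t = δ / (V + L * δ / 3)) :
    -t * δ + t ^ 2 * V / (2 * (1 - t * L / 3)) = -(δ ^ 2 / 2) / (V + L * δ / 3) := by
  have hD : 0 < V + L * δ / 3 := by positivity
  have hcoeff : 1 - t * L / 3 = V / (V + L * δ / 3) := by rw [ht]; field_simp; ring
  rw [hcoeff, ht]
  field_simp
  ring

namespace ProbabilityTheory

variable {Ω ι : Type*} [MeasurableSpace Ω] {μ : Measure Ω} {L t : ℝ}

lemma memLp_of_abs_le [IsFiniteMeasure μ] {Y : Ω → ℝ} (hY : AEMeasurable Y μ)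
    (hbound : ∀ᵐ ω ∂μ, |Y ω| ≤ L) (p : ENNReal) : MemLp Y p μ :=
  (memLp_top_of_bound hY.aestronglyMeasurable L hbound).mono_exponent le_top

theorem mgf_le_exp_variance_of_abs_le [IsProbabilityMeasure μ] {Y : Ω → ℝ}
    (hY : AEMeasurable Y μ) (hmean : μ[Y] = 0) (hbound : ∀ᵐ ω ∂μ, |Y ω| ≤ L) (ht : 0 ≤ t)
    (htL : t * L < 3) :
    mgf Y μ t ≤ exp (t ^ 2 * Var[Y; μ] / (2 * (1 - t * L / 3))) := by
  set a := t ^ 2 / (2 * (1 - t * L / 3))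
  have hY₂ := memLp_of_abs_le hY hbound 2
  have hY₁ : Integrable Y μ := hY₂.integrable one_le_two
  have hlin : Integrable (fun ω ↦ 1 + t * Y ω) μ := (integrable_const 1).add (hY₁.const_mul t)
  have hquad : Integrable (fun ω ↦ a * Y ω ^ 2) μ := hY₂.integrable_sq.const_mul a
  have hpointwise : ∀ᵐ ω ∂μ, exp (t * Y ω) ≤ 1 + t * Y ω + a * Y ω ^ 2 := by
    filter_upwards [hbound] with ω hω
    have hx : |t * Y ω| ≤ 3 * (t * L / 3) := by
      rw [abs_mul, abs_of_nonneg ht]; linarith [mul_le_mul_of_nonneg_left hω ht]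
    convert exp_le_one_add_add_sq_div (by linarith) hx using 2
    ring
  calc mgf Y μ t ≤ ∫ ω, 1 + t * Y ω + a * Y ω ^ 2 ∂μ :=
        integral_mono_of_nonneg (.of_forall fun _ ↦ (exp_pos _).le) (hlin.add hquad) hpointwise
    _ = 1 + a * Var[Y; μ] := by
        rw [integral_add hlin hquad, integral_add (integrable_const 1) (hY₁.const_mul t),
          integral_const_mul, integral_const_mul, hmean, variance_of_integral_eq_zero hY hmean]
        simp
    _ ≤ exp (t ^ 2 * Var[Y; μ] / (2 * (1 - t * L / 3))) := by
        rw [mul_div_right_comm, add_comm]; exact add_one_le_exp _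

theorem iIndepFun.mgf_sum_le_exp_sum_variance {Y : ι → Ω → ℝ} (hindep : iIndepFun Y μ)
    (hY : ∀ i, AEMeasurable (Y i) μ) (hmean : ∀ i, μ[Y i] = 0)
    (hbound : ∀ i, ∀ᵐ ω ∂μ, |Y i ω| ≤ L) (ht : 0 ≤ t) (htL : t * L < 3) (s : Finset ι) :
    mgf (∑ i ∈ s, Y i) μ t ≤ exp (t ^ 2 * (∑ i ∈ s, Var[Y i; μ]) / (2 * (1 - t * L / 3))) := by
  have := hindep.isProbabilityMeasure
  rw [hindep.mgf_sum₀ hY, Finset.mul_sum, Finset.sum_div, exp_sum]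
  exact Finset.prod_le_prod (fun _ _ ↦ mgf_nonneg)
    fun i _ ↦ mgf_le_exp_variance_of_abs_le (hY i) (hmean i) (hbound i) ht htL

lemma measure_sum_ge_eq_zero_of_sum_variance_eq_zero [IsFiniteMeasure μ] [Fintype ι]
    {Y : ι → Ω → ℝ} (hY : ∀ i, MemLp (Y i) 2 μ) (hmean : ∀ i, μ[Y i] = 0)
    (hvar : ∑ i, Var[Y i; μ] = 0) {δ : ℝ} (hδ : 0 < δ) :
    μ {ω | δ ≤ ∑ i, Y i ω} = 0 := by
  have hzero (i : ι) : ∀ᵐ ω ∂μ, Y i ω = 0 := by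
    rw [← hmean i]
    exact ae_eq_integral_of_variance_eq_zero (hY i)
      ((Finset.sum_eq_zero_iff_of_nonneg fun j _ ↦ variance_nonneg _ _).mp hvar i
        (Finset.mem_univ i))
  refine measure_mono_null (fun ω hω ↦ ?_) (ae_iff.mp (ae_all_iff.mpr hzero))
  intro hω₀
  simp only [Set.mem_ofPred_eq, hω₀, Finset.sum_const_zero] at hω
  linarith

theorem iIndepFun.measure_sum_ge_le_exp_of_abs_le [Fintype ι] {Y : ι → Ω → ℝ}
    (hindep : iIndepFun Y μ) (hY : ∀ i, Measurable (Y i)) (hmean : ∀ i, μ[Y i] = 0)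
    (hbound : ∀ i, ∀ᵐ ω ∂μ, |Y i ω| ≤ L) (hL : 0 ≤ L) {δ : ℝ} (hδ : 0 < δ) :
    μ {ω | δ ≤ ∑ i, Y i ω} ≤
      ENNReal.ofReal (exp (-(δ ^ 2 / 2) / (∑ i, Var[Y i; μ] + L * δ / 3))) := by
  have := hindep.isProbabilityMeasure
  have hY' (i : ι) : AEMeasurable (Y i) μ := (hY i).aemeasurable
  rcases (Finset.sum_nonneg fun i _ ↦ variance_nonneg (Y i) μ).eq_or_lt with hV | hV
  · rw [measure_sum_ge_eq_zero_of_sum_variance_eq_zero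
      (fun i ↦ memLp_of_abs_le (hY' i) (hbound i) 2) hmean hV.symm hδ]
    exact zero_le
  set V := ∑ i, Var[Y i; μ]
  set t := δ / (V + L * δ / 3) with ht_def
  have ht : 0 ≤ t := by positivity
  have htL : t * L < 3 := by
    rw [div_mul_eq_mul_div, div_lt_iff₀ (by positivity)]; nlinarith
  have hexp_int (i : ι) : Integrable (fun ω ↦ exp (t * Y i ω)) μ :=
    integrable_exp_mul_of_le t L ht (hY' i) ((hbound i).mono fun _ h ↦ (le_abs_self _).trans h)
  have hchernoff := measure_ge_le_exp_mul_mgf δ ht <|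
    hindep.integrable_exp_mul_sum hY (s := .univ) fun i _ ↦ hexp_int i
  simp only [Finset.sum_apply] at hchernoff
  rw [← ofReal_measureReal, ← bernstein_exponent_eq hV hL hδ.le ht_def, exp_add]
  gcongr
  exact hchernoff.trans <| by
    gcongr; exact hindep.mgf_sum_le_exp_sum_variance hY' hmean hbound ht htL _

end ProbabilityTheory

/-- Bernstein's inequality: if `X_1, …, X_n` are independent with
`|X_i − E X_i| ≤ L` a.s., then for `δ > 0`,
`P(X ≥ E X + δ) ≤ exp(−(δ²/2)/(∑ Var X_i + Lδ/3))`. -/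
theorem bernstein_inequality {Ω : Type*} [MeasurableSpace Ω] (μ : Measure Ω)
    [IsProbabilityMeasure μ] (n : ℕ) (X : Fin n → Ω → ℝ)
    (hmeas : ∀ i, Measurable (X i))
    (hint : ∀ i, Integrable (X i) μ)
    (hindep : iIndepFun X μ)
    (L : ℝ) (hL : 0 ≤ L)
    (hbound : ∀ i, ∀ᵐ ω ∂μ, |X i ω - ∫ ω', X i ω' ∂μ| ≤ L)
    (δ : ℝ) (hδ : 0 < δ) :
    μ {ω | (∑ i, ∫ ω', X i ω' ∂μ) + δ ≤ ∑ i, X i ω} ≤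
      ENNReal.ofReal
        (Real.exp (-(δ ^ 2 / 2) / ((∑ i, variance (X i) μ) + L * δ / 3))) := by
  set Y : Fin n → Ω → ℝ := fun i ω ↦ X i ω - ∫ ω', X i ω' ∂μ
  have hindepY : iIndepFun Y μ :=
    hindep.comp (fun i x ↦ x - ∫ ω', X i ω' ∂μ) fun _ ↦ measurable_id.sub_const _
  have hmeanY (i : Fin n) : μ[Y i] = 0 := by
    simp [Y, integral_sub (hint i) (integrable_const _)]
  have hvarY (i : Fin n) : Var[Y i; μ] = Var[X i; μ] :=
    variance_sub_const (hmeas i).aestronglyMeasurable _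
  have hevent : {ω | (∑ i, ∫ ω', X i ω' ∂μ) + δ ≤ ∑ i, X i ω} = {ω | δ ≤ ∑ i, Y i ω} := by
    ext ω
    simp [Y, Finset.sum_sub_distrib, le_sub_iff_add_le']
  simpa only [hevent, hvarY] using
    hindepY.measure_sum_ge_le_exp_of_abs_le (fun i ↦ (hmeas i).sub_const _) hmeanY hbound hL hδ
end

section
/- For any field F and any matrices A, B ∈ F^{d×d} and target ranks r, s, the row-column rigidity satisfies R^{rc}(A·B, r+s) ≤ R^{rc}(A, r) · R^{rc}(B, s). -/
open Matrix Finset Module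

/-- Matrix rank is subadditive. -/
lemma matrixRankAddLe {F : Type*} [Field F] {d : ℕ} (M N : Matrix (Fin d) (Fin d) F) :
    (M + N).rank ≤ M.rank + N.rank := by
  unfold Matrix.rank
  rw [Matrix.mulVecLin_add]
  have hle : LinearMap.range (M.mulVecLin + N.mulVecLin) ≤
      LinearMap.range M.mulVecLin ⊔ LinearMap.range N.mulVecLin := by
    rintro x ⟨v, rfl⟩
    exact Submodule.mem_sup.2 ⟨M.mulVecLin v, ⟨v, rfl⟩, N.mulVecLin v, ⟨v, rfl⟩, rfl⟩
  exact (Submodule.finrank_mono hle).trans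
    (Submodule.finrank_add_le_finrank_add_finrank _ _)

/-- Rows of a product of sparse matrices are sparse. -/
lemma cardSupportMulRow {F : Type*} [Field F] {d : ℕ}
    (ZA ZB : Matrix (Fin d) (Fin d) F) (t₁ t₂ : ℕ)
    (hA : ∀ i, Nat.card {j // ZA i j ≠ 0} ≤ t₁)
    (hB : ∀ i, Nat.card {j // ZB i j ≠ 0} ≤ t₂)
    (i : Fin d) : Nat.card {j // (ZA * ZB) i j ≠ 0} ≤ t₁ * t₂ := by
  classical
  have key : ∀ (M : Matrix (Fin d) (Fin d) F) (i : Fin d),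
      Nat.card {j // M i j ≠ 0} = (univ.filter (fun j => M i j ≠ 0)).card := by
    intro M i
    rw [Nat.card_eq_fintype_card, Fintype.card_subtype]
  rw [key]
  have hsub : univ.filter (fun j => (ZA * ZB) i j ≠ 0) ⊆
      (univ.filter (fun k => ZA i k ≠ 0)).biUnion
        (fun k => univ.filter (fun j => ZB k j ≠ 0)) := by
    intro j hj
    simp only [mem_filter, mem_univ, true_and] at hj
    have hex : ∃ k, ZA i k * ZB k j ≠ 0 := by
      by_contra h
      push_neg at h
      exact hj (by simp [Matrix.mul_apply, Finset.sum_eq_zero (fun k _ => h k)])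
    obtain ⟨k, hk⟩ := hex
    simp only [mem_biUnion, mem_filter, mem_univ, true_and]
    exact ⟨k, fun h => hk (by simp [h]), fun h => hk (by simp [h])⟩
  calc (univ.filter (fun j => (ZA * ZB) i j ≠ 0)).card
      ≤ _ := Finset.card_le_card hsub
    _ ≤ ∑ k ∈ univ.filter (fun k => ZA i k ≠ 0),
          (univ.filter (fun j => ZB k j ≠ 0)).card := Finset.card_biUnion_le
    _ ≤ ∑ _k ∈ univ.filter (fun k => ZA i k ≠ 0), t₂ := by
        refine Finset.sum_le_sum fun k _ => ?_
        rw [← key]; exact hB k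
    _ = (univ.filter (fun k => ZA i k ≠ 0)).card * t₂ := by
        rw [Finset.sum_const, smul_eq_mul]
    _ ≤ t₁ * t₂ := Nat.mul_le_mul_right _ (by rw [← key]; exact hA i)

/-- Row-column rigidity: the least `t` such that there is `Z` with
`rank (A - Z) ≤ r` and at most `t` nonzero entries in every row and column of `Z`. -/
noncomputable def rcRigid {F : Type*} [Field F] {α : Type*} [Fintype α] [DecidableEq α]
    (A : Matrix α α F) (r : ℕ) : ℕ :=
  sInf {t | ∃ Z : Matrix α α F, (A - Z).rank ≤ r ∧
    (∀ i, Nat.card {j // Z i j ≠ 0} ≤ t) ∧ (∀ j, Nat.card {i // Z i j ≠ 0} ≤ t)}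

lemma rcRigidSetNonempty {F : Type*} [Field F] {d : ℕ} (A : Matrix (Fin d) (Fin d) F) (r : ℕ) :
    ({t | ∃ Z : Matrix (Fin d) (Fin d) F, (A - Z).rank ≤ r ∧
      (∀ i, Nat.card {j // Z i j ≠ 0} ≤ t) ∧
      (∀ j, Nat.card {i // Z i j ≠ 0} ≤ t)} : Set ℕ).Nonempty := by
  refine ⟨d, A, ?_, fun i => ?_, fun j => ?_⟩
  · simp [sub_self, Matrix.rank_le_card_width]
  · exact (Nat.card_le_card_of_injective _ Subtype.val_injective).trans (by simp)
  · exact (Nat.card_le_card_of_injective _ Subtype.val_injective).trans (by simp)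

/-- `R^{rc}(A·B, r+s) ≤ R^{rc}(A, r) · R^{rc}(B, s)`. -/
theorem rcRigid_mul {F : Type*} [Field F] (d : ℕ) (A B : Matrix (Fin d) (Fin d) F)
    (r s : ℕ) :
    rcRigid (A * B) (r + s) ≤ rcRigid A r * rcRigid B s := by
  obtain ⟨ZA, hArk, hArow, hAcol⟩ := Nat.sInf_mem (rcRigidSetNonempty A r)
  obtain ⟨ZB, hBrk, hBrow, hBcol⟩ := Nat.sInf_mem (rcRigidSetNonempty B s)
  apply Nat.sInf_le
  refine ⟨ZA * ZB, ?_, ?_, ?_⟩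
  · have heq : A * B - ZA * ZB = (A - ZA) * B + ZA * (B - ZB) := by
      rw [sub_mul, mul_sub]
      abel
    rw [heq]
    calc ((A - ZA) * B + ZA * (B - ZB)).rank
        ≤ ((A - ZA) * B).rank + (ZA * (B - ZB)).rank := matrixRankAddLe _ _
      _ ≤ (A - ZA).rank + (B - ZB).rank :=
          Nat.add_le_add (Matrix.rank_mul_le_left _ _) (Matrix.rank_mul_le_right _ _)
      _ ≤ r + s := Nat.add_le_add hArk hBrk
  · exact cardSupportMulRow ZA ZB _ _ hArow hBrow
  · intro j
    have h := cardSupportMulRow ZBᵀ ZAᵀ _ _ hBcol hAcol j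
    rw [← Matrix.transpose_mul] at h
    rw [Nat.mul_comm]
    exact h
end

section
/- For any matrix A ∈ F^{d×d} there exist a matrix B ∈ F^{(d−1)×(d−1)}, vectors x, y ∈ F^d, a scalar λ ∈ {0,1}, and permutation matrices P_1, P_2 ∈ F^{d×d} such that A = P_1 · G_d(y)^T · diag(B, λ) · G_d(x) · P_2, where G_d(x) is the matrix equal to the identity except that its last column is x, with the (d,d) entry being x_d and (i,d) entry x_i, and all other entries of the last column of the identity replaced (i.e. G_d(x) = [I_{d−1}, x; 0, x_d] in block form with the last column replaced by x). -/
open Matrix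

/-- The V-matrix `G_d(x)`: first `d−1` columns are the standard basis vectors
`e_1, …, e_{d−1}`, and the last column is `x`. -/
def Gmat {F : Type*} [Field F] (d : ℕ) (x : Fin d → F) : Matrix (Fin d) (Fin d) F :=
  Matrix.of fun i j => if (j : ℕ) = d - 1 then x i else if i = j then (1 : F) else 0

/-- The block-diagonal matrix `diag(B, λ)` with top-left block `B` and
bottom-right `1×1` block `λ`. -/
def blockDiag1 {F : Type*} [Field F] (d : ℕ) (B : Matrix (Fin (d - 1)) (Fin (d - 1)) F)
    (lam : F) : Matrix (Fin d) (Fin d) F :=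
  Matrix.of fun i j =>
    if hi : (i : ℕ) < d - 1 then
      (if hj : (j : ℕ) < d - 1 then B ⟨i, hi⟩ ⟨j, hj⟩ else 0)
    else (if (j : ℕ) < d - 1 then 0 else lam)

/-- A permutation matrix. -/
def IsPermMatrix {F : Type*} [Field F] {α : Type*} [Fintype α] [DecidableEq α]
    (P : Matrix α α F) : Prop :=
  ∃ σ : Equiv.Perm α, P = σ.permMatrix F

namespace FactorV
variable {F : Type*} [Field F] {n : ℕ}

lemma gmat_castSucc (x : Fin (n+1) → F) (i : Fin (n+1)) (j : Fin n) :
    Gmat (n+1) x i j.castSucc = if i = j.castSucc then (1:F) else 0 := by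
  simp [Gmat, j.isLt.ne]

lemma gmat_last (x : Fin (n+1) → F) (i : Fin (n+1)) :
    Gmat (n+1) x i (Fin.last n) = x i := by
  simp [Gmat]

lemma bd_cc (B : Matrix (Fin n) (Fin n) F) (lam : F) (i j : Fin n) :
    blockDiag1 (n+1) B lam i.castSucc j.castSucc = B i j := by
  simp [blockDiag1, i.isLt, j.isLt]

lemma bd_cl (B : Matrix (Fin n) (Fin n) F) (lam : F) (i : Fin n) :
    blockDiag1 (n+1) B lam i.castSucc (Fin.last n) = 0 := by
  simp [blockDiag1, i.isLt]

lemma bd_lc (B : Matrix (Fin n) (Fin n) F) (lam : F) (j : Fin n) :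
    blockDiag1 (n+1) B lam (Fin.last n) j.castSucc = 0 := by
  simp [blockDiag1, j.isLt]

lemma bd_ll (B : Matrix (Fin n) (Fin n) F) (lam : F) :
    blockDiag1 (n+1) B lam (Fin.last n) (Fin.last n) = lam := by
  simp [blockDiag1]

-- N := blockDiag1 * Gmat x
lemma N_c (B : Matrix (Fin n) (Fin n) F) (lam : F) (x : Fin (n+1) → F)
    (a : Fin (n+1)) (j : Fin n) :
    (blockDiag1 (n+1) B lam * Gmat (n+1) x) a j.castSucc
      = blockDiag1 (n+1) B lam a j.castSucc := by
  rw [mul_apply]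
  rw [Finset.sum_eq_single j.castSucc]
  · rw [gmat_castSucc]; simp
  · intro b _ hb; rw [gmat_castSucc]; simp [hb]
  · simp

lemma N_l (B : Matrix (Fin n) (Fin n) F) (lam : F) (x : Fin (n+1) → F)
    (a : Fin (n+1)) :
    (blockDiag1 (n+1) B lam * Gmat (n+1) x) a (Fin.last n)
      = ∑ l, blockDiag1 (n+1) B lam a l * x l := by
  rw [mul_apply]
  exact Finset.sum_congr rfl fun l _ => by rw [gmat_last]

-- M := (Gmat y)ᵀ * N entries
lemma M_row_c (y : Fin (n+1) → F) (N : Matrix (Fin (n+1)) (Fin (n+1)) F)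
    (i : Fin n) (b : Fin (n+1)) :
    ((Gmat (n+1) y)ᵀ * N) i.castSucc b = N i.castSucc b := by
  rw [mul_apply]
  rw [Finset.sum_eq_single i.castSucc]
  · rw [transpose_apply, gmat_castSucc]; simp
  · intro k _ hk; rw [transpose_apply, gmat_castSucc]; simp [hk]
  · simp

lemma M_row_l (y : Fin (n+1) → F) (N : Matrix (Fin (n+1)) (Fin (n+1)) F)
    (b : Fin (n+1)) :
    ((Gmat (n+1) y)ᵀ * N) (Fin.last n) b = ∑ k, y k * N k b := by
  rw [mul_apply]
  exact Finset.sum_congr rfl fun k _ => by rw [transpose_apply, gmat_last]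

end FactorV
namespace FactorV
variable {F : Type*} [Field F] {n : ℕ}

lemma M_cc (B : Matrix (Fin n) (Fin n) F) (lam : F) (x y : Fin (n+1) → F) (i j : Fin n) :
    ((Gmat (n+1) y)ᵀ * blockDiag1 (n+1) B lam * Gmat (n+1) x) i.castSucc j.castSucc
      = B i j := by
  rw [Matrix.mul_assoc, M_row_c, N_c, bd_cc]

lemma M_cl (B : Matrix (Fin n) (Fin n) F) (lam : F) (x y : Fin (n+1) → F) (i : Fin n) :
    ((Gmat (n+1) y)ᵀ * blockDiag1 (n+1) B lam * Gmat (n+1) x) i.castSucc (Fin.last n)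
      = ∑ k, B i k * x k.castSucc := by
  rw [Matrix.mul_assoc, M_row_c, N_l, Fin.sum_univ_castSucc, bd_cl]
  simp only [bd_cc]
  ring

lemma M_lc (B : Matrix (Fin n) (Fin n) F) (lam : F) (x y : Fin (n+1) → F) (j : Fin n) :
    ((Gmat (n+1) y)ᵀ * blockDiag1 (n+1) B lam * Gmat (n+1) x) (Fin.last n) j.castSucc
      = ∑ k, y k.castSucc * B k j := by
  rw [Matrix.mul_assoc, M_row_l, Fin.sum_univ_castSucc]
  simp only [N_c, bd_cc, bd_lc, mul_zero, add_zero]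

lemma M_ll (B : Matrix (Fin n) (Fin n) F) (lam : F) (x y : Fin (n+1) → F) :
    ((Gmat (n+1) y)ᵀ * blockDiag1 (n+1) B lam * Gmat (n+1) x) (Fin.last n) (Fin.last n)
      = (∑ k, y k.castSucc * ∑ l, B k l * x l.castSucc) + lam * (y (Fin.last n) * x (Fin.last n)) := by
  rw [Matrix.mul_assoc, M_row_l, Fin.sum_univ_castSucc]
  have h1 : ∀ k : Fin n, (blockDiag1 (n+1) B lam * Gmat (n+1) x) k.castSucc (Fin.last n)
      = ∑ l, B k l * x l.castSucc := by
    intro k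
    rw [N_l, Fin.sum_univ_castSucc, bd_cl]
    simp only [bd_cc]; ring
  have h2 : (blockDiag1 (n+1) B lam * Gmat (n+1) x) (Fin.last n) (Fin.last n)
      = lam * x (Fin.last n) := by
    rw [N_l, Fin.sum_univ_castSucc, bd_ll]
    simp only [bd_lc]; simp
  simp only [h1, h2]; ring

lemma exists_middle (A' : Matrix (Fin (n+1)) (Fin (n+1)) F)
    (B : Matrix (Fin n) (Fin n) F)
    (hB : ∀ i j, A' i.castSucc j.castSucc = B i j)
    (u v : Fin n → F)
    (hu : ∀ i, A' i.castSucc (Fin.last n) = ∑ k, B i k * u k)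
    (hv : ∀ j, A' (Fin.last n) j.castSucc = ∑ k, v k * B k j) :
    ∃ (x y : Fin (n+1) → F) (lam : F), (lam = 0 ∨ lam = 1) ∧
      A' = (Gmat (n+1) y)ᵀ * blockDiag1 (n+1) B lam * Gmat (n+1) x := by
  classical
  set t : F := A' (Fin.last n) (Fin.last n) - ∑ k, v k * ∑ l, B k l * u l with ht
  refine ⟨Fin.snoc u 1, Fin.snoc v t, if t = 0 then 0 else 1, ?_, ?_⟩
  · rcases eq_or_ne t 0 with h | h
    · left; rw [if_pos h]
    · right; rw [if_neg h]
  · ext a b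
    refine Fin.lastCases ?_ (fun i => ?_) a <;> refine Fin.lastCases ?_ (fun j => ?_) b
    · rw [M_ll]
      simp only [Fin.snoc_castSucc, Fin.snoc_last]
      rcases eq_or_ne t 0 with h | h
      · rw [if_pos h]; linear_combination -ht + h
      · rw [if_neg h]; linear_combination -ht
    · rw [M_lc]; simp only [Fin.snoc_castSucc]; exact hv j
    · rw [M_cl]; simp only [Fin.snoc_castSucc]; exact hu i
    · rw [M_cc]; exact hB i j

end FactorV
namespace FactorV
variable {F : Type*} [Field F] {n : ℕ}

lemma fold_col (A : Matrix (Fin (n+1)) (Fin (n+1)) F) (r : Fin (n+1))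
    (β : Equiv.Perm (Fin (n+1))) (g : Fin (n+1) → F)
    (hg : g (β (Fin.last n)) ≠ 0)
    (hrel : ∑ j, A r j * g j = 0) :
    A r (β (Fin.last n)) =
      ∑ k : Fin n, A r (β k.castSucc) * (-(g (β (Fin.last n)))⁻¹ * g (β k.castSucc)) := by
  have h0 : ∑ j, A r (β j) * g (β j) = 0 := by
    rw [Equiv.sum_comp β (fun j => A r j * g j)]; exact hrel
  rw [Fin.sum_univ_castSucc] at h0
  have h1 : ∑ k : Fin n, A r (β k.castSucc) * (-(g (β (Fin.last n)))⁻¹ * g (β k.castSucc))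
      = -(g (β (Fin.last n)))⁻¹ * ∑ k : Fin n, A r (β k.castSucc) * g (β k.castSucc) := by
    rw [Finset.mul_sum]; exact Finset.sum_congr rfl fun k _ => by ring
  have h2 : ∑ k : Fin n, A r (β k.castSucc) * g (β k.castSucc)
      = -(A r (β (Fin.last n)) * g (β (Fin.last n))) := by linear_combination h0
  rw [h1, h2]
  field_simp

lemma fold_row (A : Matrix (Fin (n+1)) (Fin (n+1)) F) (c : Fin (n+1))
    (α : Equiv.Perm (Fin (n+1))) (h : Fin (n+1) → F)
    (hh : h (α (Fin.last n)) ≠ 0)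
    (hrel : ∑ i, h i * A i c = 0) :
    A (α (Fin.last n)) c =
      ∑ k : Fin n, (-(h (α (Fin.last n)))⁻¹ * h (α k.castSucc)) * A (α k.castSucc) c := by
  have h0 : ∑ i, h (α i) * A (α i) c = 0 := by
    rw [Equiv.sum_comp α (fun i => h i * A i c)]; exact hrel
  rw [Fin.sum_univ_castSucc] at h0
  have h1 : ∑ k : Fin n, (-(h (α (Fin.last n)))⁻¹ * h (α k.castSucc)) * A (α k.castSucc) c
      = -(h (α (Fin.last n)))⁻¹ * ∑ k : Fin n, h (α k.castSucc) * A (α k.castSucc) c := by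
    rw [Finset.mul_sum]; exact Finset.sum_congr rfl fun k _ => by ring
  have h2 : ∑ k : Fin n, h (α k.castSucc) * A (α k.castSucc) c
      = -(h (α (Fin.last n)) * A (α (Fin.last n)) c) := by linear_combination h0
  rw [h1, h2]
  field_simp

lemma surj_isUnit (B : Matrix (Fin n) (Fin n) F)
    (hsurj : ∀ w : Fin n → F, ∃ z, B *ᵥ z = w) : IsUnit B.det := by
  classical
  rw [isUnit_iff_ne_zero]
  intro hdet
  obtain ⟨v0, hv0ne, hv0⟩ := (Matrix.exists_vecMul_eq_zero_iff).2 hdet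
  obtain ⟨i, hi⟩ := Function.ne_iff.mp hv0ne
  simp only [Pi.zero_apply] at hi
  obtain ⟨z, hz⟩ := hsurj (Pi.single i 1)
  have e : v0 ⬝ᵥ (B *ᵥ z) = v0 i := by rw [hz]; simp [dotProduct, Pi.single_apply]
  rw [Matrix.dotProduct_mulVec, hv0] at e
  simp [dotProduct] at e
  exact hi e.symm
lemma exists_perm_block (A : Matrix (Fin (n+1)) (Fin (n+1)) F) :
    ∃ (α β : Equiv.Perm (Fin (n+1))) (u v : Fin n → F),
      (∀ i : Fin n, A (α i.castSucc) (β (Fin.last n))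
          = ∑ k, A (α i.castSucc) (β k.castSucc) * u k) ∧
      (∀ j : Fin n, A (α (Fin.last n)) (β j.castSucc)
          = ∑ k, v k * A (α k.castSucc) (β j.castSucc)) := by
  classical
  by_cases hA : IsUnit A.det
  · -- invertible case
    -- dependence among the truncated columns
    have hdep : ¬ LinearIndependent F (fun j : Fin (n+1) => (fun i : Fin n => A i.castSucc j)) := by
      intro hli
      have hc := hli.fintype_card_le_finrank
      rw [Module.finrank_fintype_fun_eq_card] at hc
      simp [Fintype.card_fin] at hc
    obtain ⟨g, hsum, q, hq⟩ := Fintype.not_linearIndependent_iff.mp hdep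
    set β : Equiv.Perm (Fin (n+1)) := Equiv.swap q (Fin.last n) with hβ
    have hβl : β (Fin.last n) = q := Equiv.swap_apply_right q (Fin.last n)
    have hgβ : g (β (Fin.last n)) ≠ 0 := by rw [hβl]; exact hq
    have hrel : ∀ i : Fin n, ∑ j, A i.castSucc j * g j = 0 := by
      intro i
      have := congrFun hsum i
      simp only [Finset.sum_apply, Pi.smul_apply, smul_eq_mul, Pi.zero_apply] at this
      rw [← this]
      exact Finset.sum_congr rfl fun j _ => by ring
    set u : Fin n → F := fun k => -(g (β (Fin.last n)))⁻¹ * g (β k.castSucc) with hudef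
    have hu : ∀ i : Fin n, A i.castSucc (β (Fin.last n))
        = ∑ k, A i.castSucc (β k.castSucc) * u k := fun i =>
      fold_col A i.castSucc β g hgβ (hrel i)
    -- B is invertible
    set B : Matrix (Fin n) (Fin n) F := Matrix.of fun i k => A i.castSucc (β k.castSucc) with hBdef
    have hBu : ∀ i, A i.castSucc (β (Fin.last n)) = ∑ k, B i k * u k := hu
    have hsurj : ∀ w : Fin n → F, ∃ z, B *ᵥ z = w := by
      intro w
      set w' : Fin (n+1) → F := Fin.snoc w 0 with hw'
      set z' : Fin (n+1) → F := A⁻¹ *ᵥ w' with hz'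
      have hAz' : A *ᵥ z' = w' := by
        rw [hz', Matrix.mulVec_mulVec, Matrix.mul_nonsing_inv A hA, Matrix.one_mulVec]
      have hrow : ∀ i : Fin n, ∑ j, A i.castSucc j * z' j = w i := by
        intro i
        have := congrFun hAz' i.castSucc
        simp only [Matrix.mulVec, dotProduct] at this
        rw [this, hw', Fin.snoc_castSucc]
      refine ⟨fun k => z' (β k.castSucc) + z' (β (Fin.last n)) * u k, ?_⟩
      funext i
      have e1 : ∑ j, A i.castSucc (β j) * z' (β j) = ∑ j, A i.castSucc j * z' j :=
        Equiv.sum_comp β (fun j => A i.castSucc j * z' j)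
      rw [Fin.sum_univ_castSucc] at e1
      have e2 : (B *ᵥ fun k => z' (β k.castSucc) + z' (β (Fin.last n)) * u k) i
          = (∑ k, B i k * z' (β k.castSucc)) + z' (β (Fin.last n)) * ∑ k, B i k * u k := by
        simp only [Matrix.mulVec, dotProduct, Finset.mul_sum]
        rw [← Finset.sum_add_distrib]
        exact Finset.sum_congr rfl fun k _ => by ring
      rw [e2, ← hBu i]
      have e3 : ∑ k, B i k * z' (β k.castSucc)
          = ∑ k : Fin n, A i.castSucc (β k.castSucc) * z' (β k.castSucc) := rfl
      rw [e3]
      have := hrow i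
      linear_combination e1 + this
    have hBunit : IsUnit B.det := surj_isUnit B hsurj
    -- now find v
    set w : Fin n → F := fun j => A (Fin.last n) (β j.castSucc) with hwdef
    refine ⟨1, β, u, w ᵥ* B⁻¹, fun i => by simpa using hu i, ?_⟩
    intro j
    have hvB : (w ᵥ* B⁻¹) ᵥ* B = w := by
      rw [Matrix.vecMul_vecMul, Matrix.nonsing_inv_mul B hBunit, Matrix.vecMul_one]
    exact (congrFun hvB j).symm
  · -- singular case
    have hdet : A.det = 0 := by
      rw [isUnit_iff_ne_zero] at hA; exact not_not.mp fun h => hA h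
    obtain ⟨g, hgne, hg0⟩ := (Matrix.exists_mulVec_eq_zero_iff).2 hdet
    obtain ⟨h, hhne, hh0⟩ := (Matrix.exists_vecMul_eq_zero_iff).2 hdet
    obtain ⟨q, hq⟩ := Function.ne_iff.mp hgne
    obtain ⟨p, hp⟩ := Function.ne_iff.mp hhne
    simp only [Pi.zero_apply] at hq hp
    set α : Equiv.Perm (Fin (n+1)) := Equiv.swap p (Fin.last n) with hα
    set β : Equiv.Perm (Fin (n+1)) := Equiv.swap q (Fin.last n) with hβ
    have hαl : α (Fin.last n) = p := Equiv.swap_apply_right p (Fin.last n)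
    have hβl : β (Fin.last n) = q := Equiv.swap_apply_right q (Fin.last n)
    have hgβ : g (β (Fin.last n)) ≠ 0 := by rw [hβl]; exact hq
    have hhα : h (α (Fin.last n)) ≠ 0 := by rw [hαl]; exact hp
    refine ⟨α, β, fun k => -(g (β (Fin.last n)))⁻¹ * g (β k.castSucc),
      fun k => -(h (α (Fin.last n)))⁻¹ * h (α k.castSucc), ?_, ?_⟩
    · intro i
      refine fold_col A (α i.castSucc) β g hgβ ?_
      have := congrFun hg0 (α i.castSucc)
      simpa [Matrix.mulVec, dotProduct] using this
    · intro j
      refine fold_row A (β j.castSucc) α h hhα ?_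
      have := congrFun hh0 (β j.castSucc)
      simpa [Matrix.vecMul, dotProduct] using this

end FactorV

/-- Any `d×d` matrix `A` factors as `P₁ · G_d(y)ᵀ · diag(B, λ) · G_d(x) · P₂`
with `λ ∈ {0,1}` and permutation matrices `P₁, P₂`. -/
theorem factor_through_V {F : Type*} [Field F] (d : ℕ) (hd : 2 ≤ d)
    (A : Matrix (Fin d) (Fin d) F) :
    ∃ (B : Matrix (Fin (d - 1)) (Fin (d - 1)) F) (x y : Fin d → F) (lam : F)
      (P₁ P₂ : Matrix (Fin d) (Fin d) F),
      (lam = 0 ∨ lam = 1) ∧ IsPermMatrix P₁ ∧ IsPermMatrix P₂ ∧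
      A = P₁ * (Gmat d y)ᵀ * blockDiag1 d B lam * Gmat d x * P₂ := by
  obtain ⟨n, rfl⟩ : ∃ n, d = n + 1 := ⟨d - 1, by omega⟩
  obtain ⟨α, β, u, v, hu, hv⟩ := FactorV.exists_perm_block A
  obtain ⟨x, y, lam, hlam, hmid⟩ := FactorV.exists_middle (A.submatrix α β)
      (Matrix.of fun i j => A (α i.castSucc) (β j.castSucc))
      (fun i j => rfl) u v (fun i => hu i) (fun j => hv j)
  refine ⟨Matrix.of fun i j => A (α i.castSucc) (β j.castSucc), x, y, lam,
    (α⁻¹).permMatrix F, β.permMatrix F, hlam, ⟨α⁻¹, rfl⟩, ⟨β, rfl⟩, ?_⟩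
  have key : (α⁻¹).permMatrix F * (A.submatrix ⇑α ⇑β) * β.permMatrix F = A := by
    rw [PEquiv.toMatrix_toPEquiv_mul, PEquiv.mul_toMatrix_toPEquiv,
      Matrix.submatrix_submatrix, Matrix.submatrix_submatrix]
    ext i j
    simp
  calc A = (α⁻¹).permMatrix F * (A.submatrix ⇑α ⇑β) * β.permMatrix F := key.symm
    _ = _ := by rw [hmid]; simp only [Matrix.mul_assoc]; rfl
end

section
/- For any matrix A ∈ F^{d×d} of full rank d, there exist B ∈ F^{(d−1)×(d−1)}, vectors x, y ∈ F^d with y_d = 1 and x_d ≠ 0, and a permutation matrix Q such that A·Q = G_d(y)^T · diag(B, 1) · G_d(x). -/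
open Matrix

section Helpers

variable {F : Type*} [Field F] {n : ℕ}

lemma gmat_castSucc (v : Fin (n + 1) → F) (b : Fin (n + 1)) (i : Fin n) :
    Gmat (n + 1) v b (Fin.castSucc i) = if b = Fin.castSucc i then (1 : F) else 0 := by
  simp [Gmat, (Fin.is_lt i).ne]

lemma gmat_last (v : Fin (n + 1) → F) (b : Fin (n + 1)) :
    Gmat (n + 1) v b (Fin.last n) = v b := by
  simp [Gmat]

lemma bd_cc (B : Matrix (Fin n) (Fin n) F) (lam : F) (i j : Fin n) :
    blockDiag1 (n + 1) B lam (Fin.castSucc i) (Fin.castSucc j) = B i j := by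
  simp [blockDiag1, i.is_lt, j.is_lt]

lemma bd_cl (B : Matrix (Fin n) (Fin n) F) (lam : F) (i : Fin n) :
    blockDiag1 (n + 1) B lam (Fin.castSucc i) (Fin.last n) = 0 := by
  simp [blockDiag1, i.is_lt]

lemma bd_lc (B : Matrix (Fin n) (Fin n) F) (lam : F) (j : Fin n) :
    blockDiag1 (n + 1) B lam (Fin.last n) (Fin.castSucc j) = 0 := by
  simp [blockDiag1, j.is_lt]

lemma bd_ll (B : Matrix (Fin n) (Fin n) F) (lam : F) :
    blockDiag1 (n + 1) B lam (Fin.last n) (Fin.last n) = lam := by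
  simp [blockDiag1]

end Helpers

/-- A full-rank `d×d` matrix `A` satisfies `A·Q = G_d(y)ᵀ · diag(B, 1) · G_d(x)`
for some permutation matrix `Q` and vectors `x, y` with `y_d = 1`, `x_d ≠ 0`. -/
theorem factor_fullRank {F : Type*} [Field F] (d : ℕ) (hd : 2 ≤ d)
    (A : Matrix (Fin d) (Fin d) F) (hA : A.rank = d) :
    ∃ (B : Matrix (Fin (d - 1)) (Fin (d - 1)) F) (x y : Fin d → F)
      (Q : Matrix (Fin d) (Fin d) F),
      IsPermMatrix Q ∧
      y ⟨d - 1, by omega⟩ = 1 ∧ x ⟨d - 1, by omega⟩ ≠ 0 ∧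
      A * Q = (Gmat d y)ᵀ * blockDiag1 d B 1 * Gmat d x := by
  obtain ⟨n, rfl⟩ : ∃ n, d = n + 1 := ⟨d - 1, by omega⟩
  -- `A` has nonzero determinant
  have hdetA : A.det ≠ 0 := by
    intro h
    obtain ⟨v, hv0, hv⟩ := Matrix.exists_mulVec_eq_zero_iff.mpr h
    have hsurj : Function.Surjective A.mulVecLin := by
      rw [← LinearMap.range_eq_top]
      apply Submodule.eq_top_of_finrank_eq
      have : Module.finrank F (LinearMap.range A.mulVecLin) = n + 1 := hA
      rw [this, Module.finrank_fintype_fun_eq_card, Fintype.card_fin]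
    have hinj : Function.Injective A.mulVecLin :=
      (LinearMap.injective_iff_surjective).mpr hsurj
    have : A.mulVecLin v = A.mulVecLin 0 := by
      simpa [Matrix.mulVecLin_apply] using hv
    exact hv0 (hinj this)
  -- some maximal minor along the last row is nonzero
  obtain ⟨j, hj⟩ : ∃ j : Fin (n + 1), (A.submatrix Fin.castSucc j.succAbove).det ≠ 0 := by
    by_contra hcon
    push_neg at hcon
    apply hdetA
    rw [Matrix.det_succ_row A (Fin.last n)]
    refine Finset.sum_eq_zero fun j _ => ?_
    rw [Fin.succAbove_last, hcon j, mul_zero]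
  -- the column permutation
  set σ : Equiv.Perm (Fin (n + 1)) := finSuccEquivLast.trans (finSuccEquiv' j).symm with hσ
  have hσc : ∀ k : Fin n, σ (Fin.castSucc k) = j.succAbove k := fun k => by
    simp [hσ]
  set Q := Equiv.Perm.permMatrix F σ.symm with hQ
  set N : Matrix (Fin (n + 1)) (Fin (n + 1)) F := A.submatrix id σ with hN
  have hAQ : A * Q = N := by
    rw [hQ]
    show A * (σ.symm).toPEquiv.toMatrix = N
    rw [PEquiv.mul_toMatrix_toPEquiv]
    simp [hN]
  have hdetN : N.det ≠ 0 := by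
    rw [← hAQ, Matrix.det_mul, hQ]
    rw [Matrix.det_permutation]
    rcases Int.units_eq_one_or (Equiv.Perm.sign σ.symm) with h | h <;>
      simp [h, hdetA]
  set B : Matrix (Fin n) (Fin n) F := N.submatrix Fin.castSucc Fin.castSucc with hB
  have hdetB : B.det ≠ 0 := by
    have hBe : B = A.submatrix Fin.castSucc j.succAbove := by
      ext i k
      simp [hB, hN, hσc]
    rw [hBe]
    exact hj
  have hBu : IsUnit B.det := isUnit_iff_ne_zero.mpr hdetB
  set c : Fin n → F := fun i => N (Fin.castSucc i) (Fin.last n) with hc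
  set r : Fin n → F := fun k => N (Fin.last n) (Fin.castSucc k) with hr
  set x' : Fin n → F := B⁻¹ *ᵥ c with hx'
  set y' : Fin n → F := r ᵥ* B⁻¹ with hy'
  have hBx' : B *ᵥ x' = c := by
    rw [hx', Matrix.mulVec_mulVec, Matrix.mul_nonsing_inv _ hBu, Matrix.one_mulVec]
  have hy'B : y' ᵥ* B = r := by
    rw [hy', Matrix.vecMul_vecMul, Matrix.nonsing_inv_mul _ hBu, Matrix.vecMul_one]
  have hBx'sum : ∀ i : Fin n, ∑ a : Fin n, B i a * x' a = N (Fin.castSucc i) (Fin.last n) := by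
    intro i
    have := congrFun hBx' i
    simpa [Matrix.mulVec, dotProduct, hc] using this
  have hy'Bsum : ∀ k : Fin n, ∑ i : Fin n, y' i * B i k = N (Fin.last n) (Fin.castSucc k) := by
    intro k
    have := congrFun hy'B k
    simpa [Matrix.vecMul, dotProduct, hr] using this
  set lam : F := N (Fin.last n) (Fin.last n) - r ⬝ᵥ x' with hlam
  have hlam0 : lam ≠ 0 := by
    intro h0
    apply hdetN
    refine Matrix.exists_vecMul_eq_zero_iff.mp
      ⟨fun i => Fin.lastCases 1 (fun k => -(y' k)) i, ?_, ?_⟩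
    · intro hv
      have := congrFun hv (Fin.last n)
      simp at this
    · funext k
      have expand : ((fun i => Fin.lastCases (1 : F) (fun k => -(y' k)) i) ᵥ* N) k =
          (∑ i : Fin n, -(y' i) * N (Fin.castSucc i) k) + N (Fin.last n) k := by
        simp [Matrix.vecMul, dotProduct, Fin.sum_univ_castSucc]
      rw [expand]
      induction k using Fin.lastCases with
      | last =>
        have hrx : r ⬝ᵥ x' = N (Fin.last n) (Fin.last n) := by
          have h1 : N (Fin.last n) (Fin.last n) - r ⬝ᵥ x' = 0 := hlam ▸ h0
          exact (sub_eq_zero.mp h1).symm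
        have hyc : ∑ i : Fin n, y' i * N (Fin.castSucc i) (Fin.last n) = r ⬝ᵥ x' := by
          calc ∑ i : Fin n, y' i * N (Fin.castSucc i) (Fin.last n)
              = ∑ i : Fin n, y' i * ∑ a : Fin n, B i a * x' a := by
                refine Finset.sum_congr rfl fun i _ => ?_
                rw [hBx'sum i]
            _ = ∑ a : Fin n, (∑ i : Fin n, y' i * B i a) * x' a := by
                simp_rw [Finset.mul_sum, Finset.sum_mul]
                rw [Finset.sum_comm]
                simp [mul_assoc]
            _ = ∑ a : Fin n, N (Fin.last n) (Fin.castSucc a) * x' a := by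
                refine Finset.sum_congr rfl fun a _ => ?_
                rw [hy'Bsum a]
            _ = r ⬝ᵥ x' := by simp [dotProduct, hr]
        simp only [neg_mul, Finset.sum_neg_distrib, Pi.zero_apply]
        rw [hyc, hrx]
        ring
      | cast m =>
        simp only [neg_mul, Finset.sum_neg_distrib, Pi.zero_apply]
        have : ∑ i : Fin n, y' i * N (Fin.castSucc i) (Fin.castSucc m) =
            N (Fin.last n) (Fin.castSucc m) := hy'Bsum m
        rw [this]
        ring
  refine ⟨B, fun i => Fin.lastCases lam x' i, fun i => Fin.lastCases 1 y' i, Q,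
    ⟨σ.symm, rfl⟩, ?_, ?_, ?_⟩
  · show Fin.lastCases (motive := fun _ => F) 1 y' (Fin.last n) = 1
    rw [Fin.lastCases_last]
  · show Fin.lastCases (motive := fun _ => F) lam x' (Fin.last n) ≠ 0
    rw [Fin.lastCases_last]
    exact hlam0
  · rw [hAQ]
    ext i k
    simp only [Matrix.mul_apply, Matrix.transpose_apply]
    induction i using Fin.lastCases with
    | last =>
      induction k using Fin.lastCases with
      | last =>
        simp only [gmat_last, Fin.lastCases_last]
        calc N (Fin.last n) (Fin.last n)
            = r ⬝ᵥ x' + lam := by rw [hlam]; ring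
          _ = ∑ a, (∑ b, (Fin.lastCases (1 : F) y' b) * blockDiag1 (n + 1) B 1 b a) *
                (Fin.lastCases lam x' a) := by
              rw [Fin.sum_univ_castSucc (n := n)]
              have h1 : ∀ a : Fin n,
                  (∑ b, (Fin.lastCases (1 : F) y' b) * blockDiag1 (n + 1) B 1 b (Fin.castSucc a))
                    = r a := by
                intro a
                rw [Fin.sum_univ_castSucc (n := n)]
                simp only [Fin.lastCases_castSucc, Fin.lastCases_last, bd_cc, bd_lc,
                  mul_zero, add_zero, one_mul]
                exact (hr ▸ hy'Bsum a)
              have h2 : (∑ b, (Fin.lastCases (1 : F) y' b) * blockDiag1 (n + 1) B 1 b (Fin.last n))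
                  = 1 := by
                rw [Fin.sum_univ_castSucc (n := n)]
                simp [Fin.lastCases_castSucc, Fin.lastCases_last, bd_cl, bd_ll]
              simp only [Fin.lastCases_castSucc, Fin.lastCases_last, h1, h2, one_mul]
              simp [dotProduct]
      | cast m =>
        simp only [gmat_castSucc, gmat_last, Fin.lastCases_last, mul_ite, mul_one, mul_zero]
        rw [Finset.sum_ite_eq' Finset.univ (Fin.castSucc m)]
        simp only [Finset.mem_univ, if_true]
        rw [Fin.sum_univ_castSucc (n := n)]
        simp only [Fin.lastCases_castSucc, Fin.lastCases_last, bd_cc, bd_lc,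
          mul_zero, add_zero, one_mul]
        exact (hy'Bsum m).symm
    | cast i' =>
      have hrow : ∀ a, (∑ b, (Gmat (n + 1) (fun i => Fin.lastCases (1 : F) y' i) b
          (Fin.castSucc i')) * blockDiag1 (n + 1) B 1 b a)
            = blockDiag1 (n + 1) B 1 (Fin.castSucc i') a := by
        intro a
        simp only [gmat_castSucc, ite_mul, one_mul, zero_mul]
        rw [Finset.sum_ite_eq' Finset.univ (Fin.castSucc i')]
        simp
      induction k using Fin.lastCases with
      | last =>
        simp only [gmat_last, hrow, Fin.lastCases_last]
        rw [Fin.sum_univ_castSucc (n := n)]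
        simp only [Fin.lastCases_castSucc, Fin.lastCases_last, bd_cc, bd_cl, zero_mul, add_zero]
        exact (hBx'sum i').symm
      | cast m =>
        simp only [gmat_castSucc, hrow, mul_ite, mul_one, mul_zero]
        rw [Finset.sum_ite_eq' Finset.univ (Fin.castSucc m)]
        simp only [Finset.mem_univ, if_true]
        simp only [ite_mul, one_mul, zero_mul]
        rw [Finset.sum_ite_eq' Finset.univ (Fin.castSucc i')]
        simp only [Finset.mem_univ, if_true]
        have hbd : blockDiag1 (n + 1) B 1 i'.castSucc m.castSucc = B i' m := bd_cc B 1 i' m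
        rw [hbd, hB]
        rfl
end

section
/- Any matrix A ∈ F^{d×d} can be written as a product Q_1·G_d(Y_1)^T·Q_2·…·G_d(Y_{d−1})^T·W·G_d(X_{d−1})·P_{d−1}·…·G_d(X_1)·P_1, where W is a diagonal matrix, the X_i, Y_i ∈ F^d are vectors, and the P_i, Q_i are permutation matrices. -/
open Matrix

/-!
Track a set `S` of active indices, containing the last one, such that `M` is diagonal outside
the block `S × S`. Inside the active block choose a pivot: a row `r`, a column `c`, a combination
of rows vanishing off column `c` and a combination of columns vanishing off row `r` (null vectors
if the block is singular, a row and a column of its inverse otherwise). After swapping `r` and `c`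
to the last position, multiplying by `G(u)ᵀ` on the left and `G(v)` on the right clears the last
row and column off the diagonal, and `G(u)`, `G(v)` are invertible with V-matrix inverses.
Swapping the last index with another active one leaves one active index fewer, so after `d - 1`
steps the matrix is diagonal.
-/

section

variable {F : Type*} [Field F]

section IsDiagOutside

variable {ι α : Type*}

/-- `M` is block diagonal: any block on `S × S`, diagonal elsewhere. -/
def IsDiagOutside [Zero α] (S : Finset ι) (M : Matrix ι ι α) : Prop :=
  ∀ i j, i ≠ j → (i ∉ S ∨ j ∉ S) → M i j = 0

section Zero

variable [Zero α] {S : Finset ι} {M : Matrix ι ι α}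

theorem IsDiagOutside.isDiag (hM : IsDiagOutside S M) (hS : S.card ≤ 1) : M.IsDiag :=
  fun i j hij => hM i j hij (not_and_or.mp fun h => hij (Finset.card_le_one.mp hS i h.1 j h.2))

theorem IsDiagOutside.submatrix_of_forall_notMem (hM : IsDiagOutside S M) {s t : Equiv.Perm ι}
    (hs : ∀ i ∉ S, s i = i) (ht : ∀ i ∉ S, t i = i) : IsDiagOutside S (M.submatrix s t) := by
  rintro i j hij (hi | hj)
  · rw [submatrix_apply, hs i hi]
    exact hM i (t j) (fun h => hij (t.injective ((ht i hi).trans h))) (Or.inl hi)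
  · rw [submatrix_apply, ht j hj]
    exact hM (s i) j (fun h => hij (s.injective (h.trans (hs j hj).symm))) (Or.inr hj)

theorem IsDiagOutside.submatrix_equiv (hM : IsDiagOutside S M) (σ : Equiv.Perm ι) :
    IsDiagOutside (S.map σ.symm.toEmbedding) (M.submatrix σ σ) := by
  intro i j hij h
  simp only [Finset.mem_map_equiv, Equiv.symm_symm] at h
  exact hM (σ i) (σ j) (σ.injective.ne hij) h

end Zero

variable [Fintype ι] [DecidableEq ι]

theorem Matrix.exists_pivot [Nonempty ι] (M : Matrix ι ι F) :
    ∃ r c : ι, ∃ w z : ι → F, w r ≠ 0 ∧ z c ≠ 0 ∧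
      (∀ j ≠ c, (w ᵥ* M) j = 0) ∧ (∀ i ≠ r, (M *ᵥ z) i = 0) := by
  by_cases hM : M.det = 0
  · obtain ⟨w, hw, hwM⟩ := exists_vecMul_eq_zero_iff.mpr hM
    obtain ⟨z, hz, hMz⟩ := exists_mulVec_eq_zero_iff.mpr hM
    obtain ⟨r, hr⟩ := Function.ne_iff.mp hw
    obtain ⟨c, hc⟩ := Function.ne_iff.mp hz
    exact ⟨r, c, w, z, hr, hc, fun j _ => by simp [hwM], fun i _ => by simp [hMz]⟩
  · have hunit : IsUnit M.det := isUnit_iff_ne_zero.mpr hM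
    let r := Classical.arbitrary ι
    have hsum : ∑ c, M r c * M⁻¹ c r ≠ 0 := by
      rw [← mul_apply, mul_nonsing_inv M hunit, one_apply_eq]
      exact one_ne_zero
    obtain ⟨c, -, hc⟩ := Finset.exists_ne_zero_of_sum_ne_zero hsum
    refine ⟨r, c, M⁻¹ c, fun j => M⁻¹ j r, right_ne_zero_of_mul hc, right_ne_zero_of_mul hc,
      fun j hj => ?_, fun i hi => ?_⟩
    · rw [← mul_apply_eq_vecMul, nonsing_inv_mul M hunit, one_apply_ne hj.symm]
    · have := congrFun (congrFun (mul_nonsing_inv M hunit) i) r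
      rwa [one_apply_ne hi, mul_apply] at this

variable {S : Finset ι} {M : Matrix ι ι F}

theorem IsDiagOutside.exists_pivot (hM : IsDiagOutside S M) (hS : S.Nonempty) :
    ∃ r ∈ S, ∃ c ∈ S, ∃ w z : ι → F, w r ≠ 0 ∧ z c ≠ 0 ∧
      (∀ j ≠ c, (w ᵥ* M) j = 0) ∧ (∀ i ≠ r, (M *ᵥ z) i = 0) := by
  have := hS.to_subtype
  obtain ⟨r, c, w, z, hr, hc, hwM, hMz⟩ := (M.submatrix ((↑) : S → ι) (↑)).exists_pivot
  let extend (v : S → F) (i : ι) : F := if h : i ∈ S then v ⟨i, h⟩ else 0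
  have extend_dotProduct (v : S → F) (x : ι → F) : extend v ⬝ᵥ x = ∑ i : S, v i * x i := by
    rw [dotProduct, ← Finset.sum_subset (Finset.subset_univ S) (fun i _ hi => by simp [extend, hi]),
      ← Finset.sum_coe_sort]
    simp [extend]
  refine ⟨r, r.2, c, c.2, extend w, extend z, by simpa [extend], by simpa [extend],
    fun j hj => ?_, fun i hi => ?_⟩
  · change extend w ⬝ᵥ (fun i => M i j) = 0
    rw [extend_dotProduct]
    by_cases hjS : j ∈ S
    · exact hwM ⟨j, hjS⟩ (fun h => hj (congrArg Subtype.val h))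
    · exact Finset.sum_eq_zero fun i _ => by
        rw [hM i j (fun h => hjS (h ▸ i.2)) (Or.inr hjS), mul_zero]
  · change (fun j => M i j) ⬝ᵥ extend z = 0
    rw [dotProduct_comm, extend_dotProduct]
    by_cases hiS : i ∈ S
    · rw [← hMz ⟨i, hiS⟩ (fun h => hi (congrArg Subtype.val h)), mulVec, dotProduct]
      exact Finset.sum_congr rfl fun j _ => mul_comm _ _
    · exact Finset.sum_eq_zero fun j _ => by
        rw [hM i j (fun h => hiS (h ▸ j.2)) (Or.inl hiS), mul_zero]

theorem IsDiagOutside.updateRow_mul_mul_updateCol (hM : IsDiagOutside S M) {ℓ : ι}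
    {u v : ι → F} (hu : ∀ j ≠ ℓ, (u ᵥ* M) j = 0) (hv : ∀ i ≠ ℓ, (M *ᵥ v) i = 0) :
    IsDiagOutside (S.erase ℓ) (updateRow 1 ℓ u * M * updateCol 1 ℓ v) := by
  rw [updateRow_mul, Matrix.one_mul, mul_updateCol, Matrix.mul_one, updateRow_mulVec]
  intro i j hij h
  by_cases hj : j = ℓ
  · subst hj
    simp [hij, hv i hij]
  · by_cases hi : i = ℓ
    · subst hi
      simp [updateCol_ne hj, hu j hj]
    · simp only [updateCol_ne hj, updateRow_ne hi]
      simp only [Finset.mem_erase, hi, hj, ne_eq, not_false_eq_true, true_and] at h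
      exact hM i j hij h

end IsDiagOutside

section Gmat

variable {n : ℕ}

theorem Gmat_eq_updateCol (x : Fin (n + 1) → F) :
    Gmat (n + 1) x = updateCol 1 (Fin.last n) x := by
  ext i j
  simp [Gmat, updateCol_apply, one_apply, Fin.ext_iff]

theorem Gmat_mulVec (x y : Fin (n + 1) → F) :
    Gmat (n + 1) x *ᵥ y = Function.update y (Fin.last n) 0 + y (Fin.last n) • x := by
  ext i
  simp only [mulVec, dotProduct, Gmat_eq_updateCol, updateCol_apply, one_apply]
  by_cases hi : i = Fin.last n
  · subst hi
    rw [Fintype.sum_eq_single (Fin.last n) fun k hk => by simp [hk, Ne.symm hk]]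
    simp [mul_comm]
  · rw [Fintype.sum_eq_add i (Fin.last n) hi fun k hk => by simp [hk.2, Ne.symm hk.1]]
    simp [hi, mul_comm]

theorem Gmat_mul_Gmat (x y : Fin (n + 1) → F) :
    Gmat (n + 1) x * Gmat (n + 1) y = Gmat (n + 1) (Gmat (n + 1) x *ᵥ y) := by
  rw [Gmat_eq_updateCol y, mul_updateCol, Matrix.mul_one, Gmat_eq_updateCol x, updateCol_idem,
    ← Gmat_eq_updateCol]

theorem Gmat_single_last : Gmat (n + 1) (Pi.single (Fin.last n) 1) = (1 : Matrix _ _ F) := by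
  ext i j
  simp only [Gmat_eq_updateCol, updateCol_apply, one_apply, Pi.single_apply]
  split_ifs <;> simp_all

theorem exists_Gmat_mul_Gmat_eq_one {x : Fin (n + 1) → F} (hx : x (Fin.last n) ≠ 0) :
    ∃ y, Gmat (n + 1) x * Gmat (n + 1) y = 1 := by
  refine ⟨Function.update (-(x (Fin.last n))⁻¹ • x) (Fin.last n) (x (Fin.last n))⁻¹, ?_⟩
  rw [Gmat_mul_Gmat, ← Gmat_single_last, Gmat_mulVec]
  congr 1
  ext i
  by_cases hi : i = Fin.last n
  · subst hi; simp [hx]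
  · simp [hi]

end Gmat

theorem submatrix_eq_permMatrix_mul_mul {ι : Type*} [Fintype ι] [DecidableEq ι]
    (A : Matrix ι ι F) (σ τ : Equiv.Perm ι) :
    A.submatrix σ τ = σ.permMatrix F * A * τ⁻¹.permMatrix F := by
  rw [PEquiv.toMatrix_toPEquiv_mul, PEquiv.mul_toMatrix_toPEquiv, submatrix_submatrix]
  rfl

def HasVFactorization (d k : ℕ) (A : Matrix (Fin d) (Fin d) F) : Prop :=
  ∃ (X Y : Fin k → Fin d → F) (P Q : Fin k → Matrix (Fin d) (Fin d) F)
    (W : Matrix (Fin d) (Fin d) F),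
    W.IsDiag ∧ (∀ i, IsPermMatrix (P i)) ∧ (∀ i, IsPermMatrix (Q i)) ∧
    A = (List.ofFn fun i => Q i * (Gmat d (Y i))ᵀ).prod * W *
          ((List.ofFn fun i => Gmat d (X i) * P i).reverse).prod

theorem hasVFactorization_zero {d : ℕ} {W : Matrix (Fin d) (Fin d) F} (hW : W.IsDiag) :
    HasVFactorization d 0 W :=
  ⟨Fin.elim0, Fin.elim0, Fin.elim0, Fin.elim0, W, hW, fun i => i.elim0, fun i => i.elim0,
    by simp⟩

theorem HasVFactorization.Gmat_transpose_mul_mul_Gmat_submatrix {d k : ℕ}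
    {B : Matrix (Fin d) (Fin d) F} (hB : HasVFactorization d k B) (x y : Fin d → F)
    (σ τ : Equiv.Perm (Fin d)) :
    HasVFactorization d (k + 1) (((Gmat d y)ᵀ * B * Gmat d x).submatrix σ τ) := by
  obtain ⟨X, Y, P, Q, W, hW, hP, hQ, rfl⟩ := hB
  refine ⟨Fin.cons x X, Fin.cons y Y, Fin.cons (τ⁻¹.permMatrix F) P,
    Fin.cons (σ.permMatrix F) Q, W, hW, Fin.cases ⟨_, rfl⟩ hP, Fin.cases ⟨_, rfl⟩ hQ, ?_⟩
  rw [submatrix_eq_permMatrix_mul_mul]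
  simp only [List.ofFn_succ, Fin.cons_zero, Fin.cons_succ, List.prod_cons, List.reverse_cons,
    List.prod_append, List.prod_nil, Matrix.mul_one, Matrix.mul_assoc]

section Elimination

variable {n : ℕ} {S : Finset (Fin (n + 1))} {M : Matrix (Fin (n + 1)) (Fin (n + 1)) F}

theorem IsDiagOutside.exists_submatrix_eq_Gmat_transpose_mul_mul_Gmat (hM : IsDiagOutside S M)
    (hlast : Fin.last n ∈ S) :
    ∃ (s t : Equiv.Perm (Fin (n + 1))) (x y : Fin (n + 1) → F)
      (E : Matrix (Fin (n + 1)) (Fin (n + 1)) F),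
      IsDiagOutside (S.erase (Fin.last n)) E ∧
        M.submatrix s t = (Gmat (n + 1) y)ᵀ * E * Gmat (n + 1) x := by
  obtain ⟨r, hr, c, hc, w, z, hwr, hzc, hwM, hMz⟩ := hM.exists_pivot ⟨_, hlast⟩
  let s := Equiv.swap r (Fin.last n)
  let t := Equiv.swap c (Fin.last n)
  have hN : IsDiagOutside S (M.submatrix s t) :=
    hM.submatrix_of_forall_notMem
      (fun i hi => Equiv.swap_apply_of_ne_of_ne (fun h => hi (h ▸ hr)) (fun h => hi (h ▸ hlast)))
      (fun i hi => Equiv.swap_apply_of_ne_of_ne (fun h => hi (h ▸ hc)) (fun h => hi (h ▸ hlast)))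
  have hu : ∀ j ≠ Fin.last n, ((w ∘ s) ᵥ* M.submatrix s t) j = 0 := by
    intro j hj
    rw [submatrix_vecMul_equiv, Function.comp_assoc, Equiv.self_comp_symm, Function.comp_id,
      Function.comp_apply]
    exact hwM _ fun h => hj (by simpa [t] using congrArg t h)
  have hv : ∀ i ≠ Fin.last n, (M.submatrix s t *ᵥ (z ∘ t)) i = 0 := by
    intro i hi
    rw [submatrix_mulVec_equiv, Function.comp_assoc, Equiv.self_comp_symm, Function.comp_id,
      Function.comp_apply]
    exact hMz _ fun h => hi (by simpa [s] using congrArg s h)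
  obtain ⟨u', hu'⟩ := exists_Gmat_mul_Gmat_eq_one (x := w ∘ s) (by simpa [s] using hwr)
  obtain ⟨v', hv'⟩ := exists_Gmat_mul_Gmat_eq_one (x := z ∘ t) (by simpa [t] using hzc)
  refine ⟨s, t, v', u', (Gmat (n + 1) (w ∘ s))ᵀ * M.submatrix s t * Gmat (n + 1) (z ∘ t), ?_, ?_⟩
  · rw [Gmat_eq_updateCol, Gmat_eq_updateCol, ← updateRow_transpose, transpose_one]
    exact hN.updateRow_mul_mul_updateCol hu hv
  · calc M.submatrix s t
        = (Gmat (n + 1) (w ∘ s) * Gmat (n + 1) u')ᵀ * M.submatrix s t *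
            (Gmat (n + 1) (z ∘ t) * Gmat (n + 1) v') := by
          rw [hu', hv', transpose_one, Matrix.one_mul, Matrix.mul_one]
      _ = _ := by simp only [transpose_mul, Matrix.mul_assoc]

/-- The permutation `σ` absorbs the swap that moves the cleared last index out of the
active block. -/
theorem IsDiagOutside.hasVFactorization {k : ℕ} :
    ∀ {S : Finset (Fin (n + 1))} {M : Matrix (Fin (n + 1)) (Fin (n + 1)) F}, S.card = k + 1 →
      Fin.last n ∈ S → IsDiagOutside S M → ∀ σ : Equiv.Perm (Fin (n + 1)),
        HasVFactorization (n + 1) k (M.submatrix σ σ) := by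
  induction k with
  | zero =>
    intro S M hS _ hM σ
    exact hasVFactorization_zero ((hM.isDiag hS.le).submatrix σ.injective)
  | succ k ih =>
    intro S M hS hlast hM σ
    obtain ⟨s, t, x, y, E, hE, hM_eq⟩ :=
      hM.exists_submatrix_eq_Gmat_transpose_mul_mul_Gmat hlast
    obtain ⟨κ, hκ, hκ_ne⟩ := Finset.exists_mem_ne (show 1 < S.card by omega) (Fin.last n)
    let π := Equiv.swap κ (Fin.last n)
    have hE_fact : HasVFactorization (n + 1) k E := by
      have := ih (by rw [Finset.card_map, Finset.card_erase_of_mem hlast, hS]; rfl)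
        (by simp [π, hκ, hκ_ne.symm]) (hE.submatrix_equiv π) π
      rwa [submatrix_submatrix, ← Equiv.Perm.coe_mul, Equiv.swap_mul_self, Equiv.Perm.coe_one,
        submatrix_id_id] at this
    have hM_σ : M.submatrix σ σ =
        ((Gmat (n + 1) y)ᵀ * E * Gmat (n + 1) x).submatrix (σ.trans s.symm) (σ.trans t.symm) := by
      ext i j
      simp [← hM_eq]
    rw [hM_σ]
    exact hE_fact.Gmat_transpose_mul_mul_Gmat_submatrix x y _ _

end Elimination

end

theorem factor_into_V_matrices_general {F : Type*} [Field F] (d : ℕ)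
    (A : Matrix (Fin d) (Fin d) F) :
    ∃ (X Y : Fin (d - 1) → Fin d → F)
      (P Q : Fin (d - 1) → Matrix (Fin d) (Fin d) F)
      (W : Matrix (Fin d) (Fin d) F),
      W.IsDiag ∧ (∀ i, IsPermMatrix (P i)) ∧ (∀ i, IsPermMatrix (Q i)) ∧
      A = (List.ofFn fun i => Q i * (Gmat d (Y i))ᵀ).prod * W *
            ((List.ofFn fun i => Gmat d (X i) * P i).reverse).prod := by
  cases d with
  | zero => exact hasVFactorization_zero fun i => i.elim0
  | succ n =>
    have hA : IsDiagOutside Finset.univ A := fun i j _ h => by simp at h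
    have h := hA.hasVFactorization (Finset.card_fin _) (Finset.mem_univ _) (Equiv.refl _)
    rwa [Equiv.coe_refl, submatrix_id_id] at h

/-- Any `d×d` matrix `A` can be written as
`Q₁·G_d(Y₁)ᵀ·Q₂·…·G_d(Y_{d−1})ᵀ·W·G_d(X_{d−1})·P_{d−1}·…·G_d(X₁)·P₁`
with `W` diagonal and `P_i, Q_i` permutation matrices. -/
theorem factor_into_V_matrices {F : Type*} [Field F] (d : ℕ) (hd : 2 ≤ d)
    (A : Matrix (Fin d) (Fin d) F) :
    ∃ (X Y : Fin (d - 1) → Fin d → F)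
      (P Q : Fin (d - 1) → Matrix (Fin d) (Fin d) F)
      (W : Matrix (Fin d) (Fin d) F),
      W.IsDiag ∧ (∀ i, IsPermMatrix (P i)) ∧ (∀ i, IsPermMatrix (Q i)) ∧
      A = (List.ofFn fun i => Q i * (Gmat d (Y i))ᵀ).prod * W *
            ((List.ofFn fun i => Gmat d (X i) * P i).reverse).prod :=
  factor_into_V_matrices_general d A
end

section
/- Let δ > 0 and weights w. Define the score s(x) = ∑_i w(d_i)·1[x_i = d_i] for x ∈ [d_1]×…×[d_k], with mean m under the uniform distribution; let C(δ) = {x : s(x) ≥ m+δ}, R(δ) = {x : s(x) ≤ m−δ}, and let M_c(δ), M_r(δ) be as defined below. Then for every X ∈ F^{d⃗}, the row-column rigidity satisfies R^{rc}(G_{d⃗}(X), |C(δ)| + |R(δ)|) ≤ max(M_c(δ), M_r(δ)). -/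
/-- The score `s(x) = ∑_i w(d_i)·1[x_i = d_i]` of a string `x ∈ [d₁]×…×[d_k]`. -/
def score {k : ℕ} (d : Fin k → ℕ) (w : ℕ → ℝ) (x : ∀ i, Fin (d i)) : ℝ :=
  ∑ i, if (x i : ℕ) = d i - 1 then w (d i) else 0

/-- The mean of the score under the uniform distribution on `[d₁]×…×[d_k]`. -/
noncomputable def meanScore {k : ℕ} (d : Fin k → ℕ) (w : ℕ → ℝ) : ℝ :=
  ∑ i, w (d i) / d i

/-- The high-score strings `C(δ)` (indices of dense columns). -/
def hiSet {k : ℕ} (d : Fin k → ℕ) (w : ℕ → ℝ) (δ : ℝ) : Set (∀ i, Fin (d i)) :=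
  {x | meanScore d w + δ ≤ score d w x}

/-- The low-score strings `R(δ)` (indices of dense rows). -/
def loSet {k : ℕ} (d : Fin k → ℕ) (w : ℕ → ℝ) (δ : ℝ) : Set (∀ i, Fin (d i)) :=
  {x | score d w x ≤ meanScore d w - δ}

lemma myrank_add_le {F : Type*} [Field F] {m n : Type*} [Fintype m] [Fintype n]
    (A B : Matrix m n F) : (A + B).rank ≤ A.rank + B.rank := by
  have h : LinearMap.range (A + B).mulVecLin ≤
      LinearMap.range A.mulVecLin ⊔ LinearMap.range B.mulVecLin := by
    rintro x ⟨v, rfl⟩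
    rw [Matrix.mulVecLin_add]
    exact Submodule.add_mem_sup ⟨v, rfl⟩ ⟨v, rfl⟩
  calc (A + B).rank ≤ Module.finrank F ↥(LinearMap.range A.mulVecLin ⊔ LinearMap.range B.mulVecLin) :=
        Submodule.finrank_mono h
    _ ≤ A.rank + B.rank := Submodule.finrank_add_le_finrank_add_finrank _ _

lemma diag_card {F : Type*} [Field F] {α : Type*} [Fintype α] (S : Set α)
    [DecidablePred (· ∈ S)] :
    Nat.card {x // (if x ∈ S then (1 : F) else 0) ≠ 0} = Nat.card S :=
  Nat.card_congr (Equiv.subtypeEquivRight fun x => by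
    by_cases h : x ∈ S <;> simp [h])

/-- `R^{rc}(G_{d⃗}(X), |C(δ)| + |R(δ)|) ≤ max(M_c(δ), M_r(δ))`, where `M_c(δ)`
bounds `|T_c(δ, y)|` for every column index `y ∉ C(δ)` and `M_r(δ)` bounds
`|T_r(δ, x)|` for every row index `x ∉ R(δ)`. -/
theorem rcRigid_kron_V {F : Type*} [Field F] (k : ℕ) (d : Fin k → ℕ)
    (hd : ∀ i, 2 ≤ d i) (w : ℕ → ℝ) (δ : ℝ) (hδ : 0 < δ)
    (X : ∀ i, Fin (d i) → F) (Mc Mr : ℕ)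
    (hMc : ∀ y ∉ hiSet d w δ,
      Nat.card {x : ∀ i, Fin (d i) |
        x ∉ loSet d w δ ∧ ∀ i, y i = x i ∨ (y i : ℕ) = d i - 1} ≤ Mc)
    (hMr : ∀ x ∉ loSet d w δ,
      Nat.card {y : ∀ i, Fin (d i) |
        y ∉ hiSet d w δ ∧ ∀ i, y i = x i ∨ (y i : ℕ) = d i - 1} ≤ Mr) :
    rcRigid (Matrix.of fun x y : ∀ i, Fin (d i) => ∏ i, Gmat (d i) (X i) (x i) (y i))
      (Nat.card (hiSet d w δ) + Nat.card (loSet d w δ)) ≤ max Mc Mr := by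
  classical
  set A : Matrix (∀ i, Fin (d i)) (∀ i, Fin (d i)) F :=
    Matrix.of fun x y => ∏ i, Gmat (d i) (X i) (x i) (y i) with hA
  -- nonzero entries of A satisfy the agreement condition
  have hAne : ∀ x y, A x y ≠ 0 → ∀ i, y i = x i ∨ (y i : ℕ) = d i - 1 := by
    intro x y h i
    have hi : Gmat (d i) (X i) (x i) (y i) ≠ 0 :=
      Finset.prod_ne_zero_iff.mp (by simpa [hA] using h) i (Finset.mem_univ i)
    by_cases hlast : (y i : ℕ) = d i - 1
    · exact Or.inr hlast
    · left
      by_contra hxy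
      apply hi
      have hne : x i ≠ y i := fun h' => hxy h'.symm
      simp [Gmat, hlast, hne]
  set Z : Matrix (∀ i, Fin (d i)) (∀ i, Fin (d i)) F :=
    Matrix.of fun x y => if x ∉ loSet d w δ ∧ y ∉ hiSet d w δ then A x y else 0 with hZ
  apply Nat.sInf_le
  refine ⟨Z, ?_, ?_, ?_⟩
  · -- rank bound
    set eR : (∀ i, Fin (d i)) → F := fun x => if x ∈ loSet d w δ then (1 : F) else 0
    set eC : (∀ i, Fin (d i)) → F := fun y => if y ∈ hiSet d w δ then (1 : F) else 0
    set eRc : (∀ i, Fin (d i)) → F := fun x => if x ∈ loSet d w δ then 0 else (1 : F)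
    have hdecomp : A - Z = Matrix.diagonal eR * (A - Z) +
        (Matrix.diagonal eRc * (A - Z)) * Matrix.diagonal eC := by
      ext x y
      simp only [Matrix.add_apply, Matrix.diagonal_mul, Matrix.mul_diagonal,
        Matrix.sub_apply, hZ, Matrix.of_apply, eR, eRc, eC]
      by_cases hx : x ∈ loSet d w δ <;> by_cases hy : y ∈ hiSet d w δ <;>
        simp [hx, hy] <;> ring
    rw [hdecomp]
    calc (Matrix.diagonal eR * (A - Z) +
        (Matrix.diagonal eRc * (A - Z)) * Matrix.diagonal eC).rank
        ≤ (Matrix.diagonal eR * (A - Z)).rank +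
          ((Matrix.diagonal eRc * (A - Z)) * Matrix.diagonal eC).rank :=
          myrank_add_le _ _
      _ ≤ (Matrix.diagonal eR).rank + (Matrix.diagonal eC).rank := by
          gcongr
          · exact Matrix.rank_mul_le_left _ _
          · exact Matrix.rank_mul_le_right _ _
      _ = Nat.card (loSet d w δ) + Nat.card (hiSet d w δ) := by
          rw [Matrix.rank_diagonal, Matrix.rank_diagonal,
            ← Nat.card_eq_fintype_card, ← Nat.card_eq_fintype_card]
          congr 1
          · exact diag_card _
          · exact diag_card _
      _ = Nat.card (hiSet d w δ) + Nat.card (loSet d w δ) := Nat.add_comm _ _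
  · -- row bound
    intro x
    by_cases hx : x ∈ loSet d w δ
    · have : ∀ y, Z x y = 0 := fun y => by simp [hZ, hx]
      have he : IsEmpty {j // Z x j ≠ 0} := ⟨fun ⟨j, hj⟩ => hj (this j)⟩
      simp [Nat.card_of_isEmpty]
    · calc Nat.card {y // Z x y ≠ 0}
          ≤ Nat.card {y : ∀ i, Fin (d i) |
              y ∉ hiSet d w δ ∧ ∀ i, y i = x i ∨ (y i : ℕ) = d i - 1} := by
            apply Nat.card_mono (Set.toFinite _)
            intro y hy
            simp only [hZ, Matrix.of_apply, ne_eq, Set.mem_setOf_eq] at hy ⊢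
            by_cases hyC : y ∈ hiSet d w δ
            · exact absurd (by simp [hyC]) hy
            · refine ⟨hyC, hAne x y ?_ ⟩
              intro h0
              exact hy (by simp [hx, hyC, h0])
        _ ≤ Mr := hMr x hx
        _ ≤ max Mc Mr := le_max_right _ _
  · -- column bound
    intro y
    by_cases hy : y ∈ hiSet d w δ
    · have : ∀ x, Z x y = 0 := fun x => by simp [hZ, hy]
      have he : IsEmpty {i // Z i y ≠ 0} := ⟨fun ⟨i, hi⟩ => hi (this i)⟩
      simp [Nat.card_of_isEmpty]
    · calc Nat.card {x // Z x y ≠ 0}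
          ≤ Nat.card {x : ∀ i, Fin (d i) |
              x ∉ loSet d w δ ∧ ∀ i, y i = x i ∨ (y i : ℕ) = d i - 1} := by
            apply Nat.card_mono (Set.toFinite _)
            intro x hx
            simp only [hZ, Matrix.of_apply, ne_eq, Set.mem_setOf_eq] at hx ⊢
            by_cases hxR : x ∈ loSet d w δ
            · exact absurd (by simp [hxR]) hx
            · refine ⟨hxR, hAne x y ?_⟩
              intro h0
              exact hx (by simp [hxR, hy, h0])
        _ ≤ Mc := hMc y hy
        _ ≤ max Mc Mr := le_max_left _ _
end

section
/- Let A be an n×n matrix and B an m×m matrix over a field F. Then R^{rc}(A⊗B, r_a·m + r_b·n) ≤ R^{rc}(A, r_a) · R^{rc}(B, r_b). -/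
open Kronecker

/-!
Take optimal corrections `ZA`, `ZB` for `A` and `B` and use `ZA ⊗ ZB` for `A ⊗ B`: a row (column)
of `ZA ⊗ ZB` is a product of a row (column) of `ZA` and one of `ZB`, so it has at most
`R(A, ra) · R(B, rb)` nonzero entries. The residual splits as
`A ⊗ B - ZA ⊗ ZB = (A - ZA) ⊗ B + ZA ⊗ (B - ZB)`, and factoring a matrix `X = C * D` through
`Fin X.rank` gives `X ⊗ Y = (C ⊗ 1) * (D ⊗ Y)`, whence `rank (X ⊗ Y) ≤ rank X · m` and likewise
`rank (X ⊗ Y) ≤ n · rank Y`.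
-/

theorem Nat.card_mul_ne_zero_le {M₀ β γ : Type*} [MulZeroClass M₀] [Finite β] [Finite γ]
    (f : β → M₀) (g : γ → M₀) :
    Nat.card {p : β × γ // f p.1 * g p.2 ≠ 0} ≤
      Nat.card {b // f b ≠ 0} * Nat.card {c // g c ≠ 0} := by
  rw [← Nat.card_prod]
  refine Nat.card_le_card_of_injective
    (fun p => (⟨p.1.1, left_ne_zero_of_mul p.2⟩, ⟨p.1.2, right_ne_zero_of_mul p.2⟩)) ?_
  rintro ⟨⟨b, c⟩, _⟩ ⟨⟨b', c'⟩, _⟩ h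
  simp_all

namespace Matrix

variable {F : Type*} [Field F] {l m n p : Type*}

theorem kronecker_sub_kronecker (A Z : Matrix l m F) (B W : Matrix n p F) :
    A ⊗ₖ B - Z ⊗ₖ W = (A - Z) ⊗ₖ B + Z ⊗ₖ (B - W) := by
  ext ⟨i, i'⟩ ⟨j, j'⟩
  simp only [sub_apply, add_apply, kronecker_apply]
  ring

variable [Fintype n]

theorem rank_add_le (M N : Matrix m n F) : (M + N).rank ≤ M.rank + N.rank := by
  rw [rank, mulVecLin_add]
  exact (Submodule.finrank_mono (LinearMap.range_add_le _ _)).trans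
    (Submodule.finrank_add_le_finrank_add_finrank _ _)

variable [Fintype l] [Fintype m] [Fintype p]

theorem exists_eq_mul_of_rank (A : Matrix m n F) :
    ∃ (C : Matrix m (Fin A.rank) F) (D : Matrix (Fin A.rank) n F), A = C * D := by
  let W := Submodule.span F (Set.range A.col)
  let b : Module.Basis (Fin A.rank) F W :=
    Module.finBasisOfFinrankEq F W (rank_eq_finrank_span_cols A).symm
  let col (j : n) : W := ⟨A.col j, Submodule.subset_span ⟨j, rfl⟩⟩
  refine ⟨of fun i k => (b k : m → F) i, of fun k j => b.repr (col j) k, ?_⟩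
  ext i j
  have hcol := congrArg (fun w : W => (w : m → F) i) (b.sum_repr (col j))
  simp only [col, AddSubmonoidClass.coe_finsetSum, Submodule.coe_smul, Finset.sum_apply,
    Pi.smul_apply, smul_eq_mul, col_apply] at hcol
  rw [mul_apply, ← hcol]
  exact Finset.sum_congr rfl fun k _ => mul_comm _ _

theorem rank_kronecker_le_rank_mul_card (X : Matrix l m F) (Y : Matrix n p F) :
    (X ⊗ₖ Y).rank ≤ X.rank * Fintype.card n := by
  classical
  obtain ⟨C, D, hX⟩ := exists_eq_mul_of_rank X
  calc (X ⊗ₖ Y).rank = (C ⊗ₖ (1 : Matrix n n F) * (D ⊗ₖ Y)).rank := by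
        rw [← mul_kronecker_mul, Matrix.one_mul, ← hX]
    _ ≤ Fintype.card (Fin X.rank × n) := (rank_mul_le_left _ _).trans (rank_le_card_width _)
    _ = X.rank * Fintype.card n := by simp

theorem rank_kronecker_le_card_mul_rank (X : Matrix l m F) (Y : Matrix n p F) :
    (X ⊗ₖ Y).rank ≤ Fintype.card l * Y.rank := by
  classical
  obtain ⟨C, D, hY⟩ := exists_eq_mul_of_rank Y
  calc (X ⊗ₖ Y).rank = ((1 : Matrix l l F) ⊗ₖ C * (X ⊗ₖ D)).rank := by
        rw [← mul_kronecker_mul, Matrix.one_mul, ← hY]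
    _ ≤ Fintype.card (l × Fin Y.rank) := (rank_mul_le_left _ _).trans (rank_le_card_width _)
    _ = Fintype.card l * Y.rank := by simp

theorem rank_kronecker_sub_kronecker_le (A Z : Matrix l m F) (B W : Matrix n p F) :
    (A ⊗ₖ B - Z ⊗ₖ W).rank ≤ (A - Z).rank * Fintype.card n + Fintype.card l * (B - W).rank := by
  rw [kronecker_sub_kronecker]
  exact (rank_add_le _ _).trans <|
    add_le_add (rank_kronecker_le_rank_mul_card _ _) (rank_kronecker_le_card_mul_rank _ _)

end Matrix

section rcRigid

variable {F α : Type*} [Field F] [Fintype α] [DecidableEq α]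

theorem rcRigid_le {A Z : Matrix α α F} {r t : ℕ} (hrank : (A - Z).rank ≤ r)
    (hrow : ∀ i, Nat.card {j // Z i j ≠ 0} ≤ t) (hcol : ∀ j, Nat.card {i // Z i j ≠ 0} ≤ t) :
    rcRigid A r ≤ t :=
  Nat.sInf_le ⟨Z, hrank, hrow, hcol⟩

theorem exists_sub_rank_le_rcRigid (A : Matrix α α F) (r : ℕ) :
    ∃ Z : Matrix α α F, (A - Z).rank ≤ r ∧
      (∀ i, Nat.card {j // Z i j ≠ 0} ≤ rcRigid A r) ∧
      (∀ j, Nat.card {i // Z i j ≠ 0} ≤ rcRigid A r) :=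
  Nat.sInf_mem (s := {t | ∃ Z : Matrix α α F, (A - Z).rank ≤ r ∧
      (∀ i, Nat.card {j // Z i j ≠ 0} ≤ t) ∧ (∀ j, Nat.card {i // Z i j ≠ 0} ≤ t)})
    ⟨Nat.card α, A, by simp, fun _ => Finite.card_subtype_le _, fun _ => Finite.card_subtype_le _⟩

end rcRigid

/-- `R^{rc}(A⊗B, r_a·m + r_b·n) ≤ R^{rc}(A, r_a) · R^{rc}(B, r_b)`. -/
theorem rcRigid_kronecker {F : Type*} [Field F] (n m : ℕ)
    (A : Matrix (Fin n) (Fin n) F) (B : Matrix (Fin m) (Fin m) F) (ra rb : ℕ) :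
    rcRigid (A ⊗ₖ B) (ra * m + rb * n) ≤ rcRigid A ra * rcRigid B rb := by
  obtain ⟨ZA, hA, hrowA, hcolA⟩ := exists_sub_rank_le_rcRigid A ra
  obtain ⟨ZB, hB, hrowB, hcolB⟩ := exists_sub_rank_le_rcRigid B rb
  refine rcRigid_le (Z := ZA ⊗ₖ ZB) ?_ (fun i => ?_) (fun j => ?_)
  · calc (A ⊗ₖ B - ZA ⊗ₖ ZB).rank ≤ (A - ZA).rank * m + n * (B - ZB).rank := by
          simpa using Matrix.rank_kronecker_sub_kronecker_le A ZA B ZB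
      _ ≤ ra * m + rb * n := by rw [mul_comm n]; gcongr
  · exact (Nat.card_mul_ne_zero_le _ _).trans (Nat.mul_le_mul (hrowA i.1) (hrowB i.2))
  · exact (Nat.card_mul_ne_zero_le _ _).trans (Nat.mul_le_mul (hcolA j.1) (hcolB j.2))
end
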